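/- Let F_q be a finite field with q ≡ 1 (mod 4), and let C_1, C_2, C_3, C_4 be LCD codes over F_q with parameters [n, k_i, d_i] for i = 1,2,3,4. Let A be the 4×4 matrix over F_q with rows (1,1,1,1), (1,1,−1,−1), (1,−1,1,−1), (1,−1,−1,1). Then the matrix-product code [C_1,C_2,C_3,C_4]A is an LCD code over F_q with parameters [4n, k_1+k_2+k_3+k_4, ≥ min{4d_1, 2d_2, 2d_3, d_4}]. -/

import Mathlib

open Polynomial Matrix Finset

variable {F : Type*} [Field F]

/-- The minimum (Hamming) distance of a linear code `C ⊆ F^ι`: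
the least Hamming weight of a nonzero codeword. -/
noncomputable def minDist {ι : Type*} [Fintype ι] [DecidableEq F]
    (C : Submodule F (ι → F)) : ℕ :=
  sInf {d | ∃ x ∈ C, x ≠ 0 ∧ hammingNorm x = d}

/-- The Euclidean dual of a linear code. -/
def dualCode {ι : Type*} [Fintype ι] (C : Submodule F (ι → F)) :
    Submodule F (ι → F) where
  carrier := {a | ∀ b ∈ C, ∑ i, a i * b i = 0}
  add_mem' := by
    intro a b ha hb c hc
    simp only [Pi.add_apply, add_mul, Finset.sum_add_distrib,
      ha c hc, hb c hc, add_zero]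
  zero_mem' := by
    intro b hb
    simp
  smul_mem' := by
    intro r a ha b hb
    simp only [Pi.smul_apply, smul_eq_mul, mul_assoc, ← Finset.mul_sum,
      ha b hb, mul_zero]

/-- `C` is a linear complementary dual (LCD) code. -/
def IsLCD {ι : Type*} [Fintype ι] (C : Submodule F (ι → F)) : Prop :=
  C ⊓ dualCode C = ⊥

/-- The Hermitian dual (with respect to `⟨a,b⟩ = ∑ i, a i * (b i)^l`) of a linear code. -/
def hermitianDual (l : ℕ) {ι : Type*} [Fintype ι] (C : Submodule F (ι → F)) :
    Submodule F (ι → F) where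
  carrier := {a | ∀ b ∈ C, ∑ i, a i * (b i) ^ l = 0}
  add_mem' := by
    intro a b ha hb c hc
    simp only [Pi.add_apply, add_mul, Finset.sum_add_distrib,
      ha c hc, hb c hc, add_zero]
  zero_mem' := by
    intro b hb
    simp
  smul_mem' := by
    intro r a ha b hb
    simp only [Pi.smul_apply, smul_eq_mul, mul_assoc, ← Finset.mul_sum,
      ha b hb, mul_zero]

/-- `C` is a Hermitian linear complementary dual code. -/
def IsHermitianLCD (l : ℕ) {ι : Type*} [Fintype ι] (C : Submodule F (ι → F)) : Prop :=
  C ⊓ hermitianDual l C = ⊥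

/-- The matrix-product code `[C_1, …, C_s]·A`: all concatenated vectors
`(∑ i a_{i1} c_i, …, ∑ i a_{im} c_i)` with `c_i ∈ C_i`; coordinates are indexed by
`Fin m × Fin n` (block `j`, position `t` within block). -/
def matrixProductCode {s m n : ℕ} (A : Matrix (Fin s) (Fin m) F)
    (C : Fin s → Submodule F (Fin n → F)) :
    Submodule F (Fin m × Fin n → F) where
  carrier := {x | ∃ c : Fin s → (Fin n → F), (∀ i, c i ∈ C i) ∧
    x = fun p => ∑ i, A i p.1 * c i p.2}
  add_mem' := by
    rintro x y ⟨c, hc, rfl⟩ ⟨d, hd, rfl⟩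
    refine ⟨fun i => c i + d i, fun i => (C i).add_mem (hc i) (hd i), ?_⟩
    funext p
    simp [mul_add, Finset.sum_add_distrib]
  zero_mem' := ⟨0, fun i => (C i).zero_mem, by funext p; simp⟩
  smul_mem' := by
    rintro r x ⟨c, hc, rfl⟩
    refine ⟨fun i => r • c i, fun i => (C i).smul_mem r (hc i), ?_⟩
    funext p
    simp [Finset.mul_sum, mul_left_comm]

/-- A matrix is non-singular by columns (NSC) if, for every `t ≤ s` and every strictly
increasing choice of `t` columns, the `t × t` submatrix formed from the first `t` rows
and those columns is non-singular. -/
def NSC {s m : ℕ} (A : Matrix (Fin s) (Fin m) F) : Prop :=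
  ∀ (t : ℕ) (ht : t ≤ s) (j : Fin t → Fin m), StrictMono j →
    (Matrix.of fun a b : Fin t => A (Fin.castLE ht a) (j b)).det ≠ 0

/-- The cyclic code of length `n` with generator polynomial `g` (a divisor of `Xⁿ - 1`),
viewed in `F^n` via the coefficient identification: a word `c` lies in the code iff the
associated polynomial `∑ cᵢ Xⁱ` (of degree `< n`) is a multiple of `g`. -/
def cyclicCode (n : ℕ) (g : F[X]) : Submodule F (Fin n → F) where
  carrier := {c | g ∣ ∑ i : Fin n, Polynomial.C (c i) * Polynomial.X ^ (i : ℕ)}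
  add_mem' := by
    intro a b ha hb
    have h : (∑ i : Fin n, Polynomial.C ((a + b) i) * Polynomial.X ^ (i : ℕ))
        = (∑ i : Fin n, Polynomial.C (a i) * Polynomial.X ^ (i : ℕ))
          + (∑ i : Fin n, Polynomial.C (b i) * Polynomial.X ^ (i : ℕ)) := by
      simp [add_mul, Finset.sum_add_distrib]
    simp only [Set.mem_setOf_eq] at ha hb ⊢
    rw [h]
    exact dvd_add ha hb
  zero_mem' := by simp
  smul_mem' := by
    intro r a ha
    have h : (∑ i : Fin n, Polynomial.C ((r • a) i) * Polynomial.X ^ (i : ℕ))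
        = Polynomial.C r * ∑ i : Fin n, Polynomial.C (a i) * Polynomial.X ^ (i : ℕ) := by
      simp [Finset.mul_sum, mul_assoc]
    simp only [Set.mem_setOf_eq] at ha ⊢
    rw [h]
    exact ha.mul_left _

/-- The conjugate-reciprocal polynomial
`f^⊥(x) = a₀^{-l} (a_k^l + a_{k-1}^l x + ⋯ + a₀^l x^k)` of `f = a₀ + a₁ x + ⋯ + a_k x^k`. -/
noncomputable def conjReciprocal (l : ℕ) (f : F[X]) : F[X] :=
  Polynomial.C ((f.coeff 0 ^ l)⁻¹) *
    ∑ i ∈ Finset.range (f.natDegree + 1),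
      Polynomial.C (f.coeff (f.natDegree - i) ^ l) * Polynomial.X ^ i

/-!
Column `t` of the codeword `(∑ᵢ A i j • cᵢ)ⱼ` is `Aᵀ vₜ` with `vₜ = (cᵢ t)ᵢ`. As `A Aᵀ = 4 I` and
`4 ≠ 0` (`q` is odd), the pairing of two codewords splits as `4 ∑ᵢ ⟨cᵢ, c'ᵢ⟩`, so a codeword
orthogonal to the whole code has every `cᵢ` in `Cᵢ ∩ Cᵢ^⊥ = 0`; and `A` is invertible, which gives
the dimension. For the distance, let `i` be the last index with `cᵢ ≠ 0`: at each of the at least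
`dᵢ` positions `t` with `cᵢ t ≠ 0`, the column `Aᵀ vₜ` is a combination of the first `i + 1` rows
of `A` involving row `i`, and such a combination has at least `4, 2, 2, 1` nonzero entries for
`i = 0, 1, 2, 3`.
-/

section HammingNorm

variable {ι κ β : Type*} [Fintype ι] [Fintype κ] [Zero β] [DecidableEq β]

theorem hammingNorm_prod_eq_sum (x : ι × κ → β) :
    hammingNorm x = ∑ t, hammingNorm fun j => x (j, t) := by
  simp only [hammingNorm, Finset.card_filter, Fintype.sum_prod_type_right]

theorem two_le_hammingNorm_of_ne [DecidableEq ι] {w : ι → β} {a b c d : ι}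
    (hdisj : Disjoint ({a, b} : Finset ι) {c, d}) (hab : w a ≠ w b) (hcd : w c ≠ w d) :
    2 ≤ hammingNorm w := by
  obtain ⟨j₁, hj₁, hw₁⟩ : ∃ j ∈ ({a, b} : Finset ι), w j ≠ 0 := by
    by_contra! h
    simp_all
  obtain ⟨j₂, hj₂, hw₂⟩ : ∃ j ∈ ({c, d} : Finset ι), w j ≠ 0 := by
    by_contra! h
    simp_all
  calc 2 = #{j₁, j₂} := (card_pair (hdisj.forall_ne_finset hj₁ hj₂)).symm
    _ ≤ hammingNorm w := card_le_card fun j hj => by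
      rcases mem_insert.1 hj with rfl | hj
      · exact mem_filter.2 ⟨mem_univ _, hw₁⟩
      · exact mem_filter.2 ⟨mem_univ _, mem_singleton.1 hj ▸ hw₂⟩

end HammingNorm

section MinDist

variable {ι : Type*} [Fintype ι] [DecidableEq F] {C : Submodule F (ι → F)}

theorem minDist_le_hammingNorm {x : ι → F} (hx : x ∈ C) (hx₀ : x ≠ 0) :
    minDist C ≤ hammingNorm x :=
  Nat.sInf_le ⟨x, hx, hx₀, rfl⟩

theorem le_minDist {N : ℕ} (hC : C ≠ ⊥) (h : ∀ x ∈ C, x ≠ 0 → N ≤ hammingNorm x) :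
    N ≤ minDist C := by
  obtain ⟨x, hx, hx₀⟩ := (Submodule.ne_bot_iff C).1 hC
  refine le_csInf ⟨_, x, hx, hx₀, rfl⟩ ?_
  rintro _ ⟨y, hy, hy₀, rfl⟩
  exact h y hy hy₀

end MinDist

section MatrixProductCode

variable {s m n : ℕ} (A : Matrix (Fin s) (Fin m) F) (C : Fin s → Submodule F (Fin n → F))

def matrixProductMap : (∀ i, C i) →ₗ[F] (Fin m × Fin n → F) where
  toFun c p := ∑ i, A i p.1 * (c i : Fin n → F) p.2
  map_add' c c' := by
    ext p
    simp [mul_add, sum_add_distrib]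
  map_smul' r c := by
    ext p
    simp [mul_sum, mul_left_comm]

theorem range_matrixProductMap :
    LinearMap.range (matrixProductMap A C) = matrixProductCode A C := by
  ext x
  constructor
  · rintro ⟨c, rfl⟩
    exact ⟨fun i => c i, fun i => (c i).2, rfl⟩
  · rintro ⟨c, hc, rfl⟩
    exact ⟨fun i => ⟨c i, hc i⟩, rfl⟩

variable {A}

theorem matrixProductMap_injective (hA : Function.Injective Aᵀ.mulVec) :
    Function.Injective (matrixProductMap A C) := by
  rw [← LinearMap.ker_eq_bot, Submodule.eq_bot_iff]
  intro c hc
  have hcol : ∀ t, (fun i => (c i : Fin n → F) t) = 0 := fun t =>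
    hA <| by
      rw [mulVec_zero]
      exact funext fun j => congrFun hc (j, t)
  ext i t
  exact congrFun (hcol t) i

theorem finrank_matrixProductCode (hA : Function.Injective Aᵀ.mulVec) :
    Module.finrank F (matrixProductCode A C) = ∑ i, Module.finrank F (C i) := by
  rw [← range_matrixProductMap, LinearMap.finrank_range_of_inj (matrixProductMap_injective C hA),
    Module.finrank_pi_fintype]

variable (A)

theorem sum_matrixProduct_mul_matrixProduct (c b : Fin s → Fin n → F) :
    ∑ p : Fin m × Fin n, (∑ i, A i p.1 * c i p.2) * (∑ i, A i p.1 * b i p.2)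
      = ∑ t, (fun i => c i t) ⬝ᵥ ((A * Aᵀ) *ᵥ fun i => b i t) := by
  rw [Fintype.sum_prod_type_right]
  refine sum_congr rfl fun t _ => ?_
  rw [← mulVec_mulVec, dotProduct_mulVec, ← mulVec_transpose]
  rfl

variable {A C}

theorem isLCD_matrixProductCode {w : Fin s → F} (hA : A * Aᵀ = diagonal w)
    (hw : ∀ i, w i ≠ 0) (hC : ∀ i, IsLCD (C i)) : IsLCD (matrixProductCode A C) := by
  rw [IsLCD, Submodule.eq_bot_iff]
  rintro _ ⟨⟨c, hc, rfl⟩, hdual⟩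
  have hc₀ : ∀ i, c i = 0 := by
    intro i
    have hci : c i ∈ C i ⊓ dualCode (C i) := by
      refine ⟨hc i, fun b hb => ?_⟩
      have hmem : (fun p : Fin m × Fin n =>
          ∑ i', A i' p.1 * (Pi.single i b : Fin s → Fin n → F) i' p.2)
            ∈ matrixProductCode A C := by
        refine ⟨Pi.single i b, fun i' => ?_, rfl⟩
        rcases eq_or_ne i' i with rfl | hi'
        · simpa using hb
        · simp [hi']
      have hpair : w i * ∑ t, c i t * b t = 0 := by
        rw [← hdual _ hmem, sum_matrixProduct_mul_matrixProduct, hA]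
        simp [mulVec_diagonal, dotProduct, Pi.single_apply, ite_apply, mul_sum, mul_left_comm]
      exact (mul_eq_zero.1 hpair).resolve_left (hw i)
    rw [hC i] at hci
    exact (Submodule.mem_bot F).1 hci
  ext p
  simp [hc₀]

-- `Aᵀ *ᵥ v` is the combination `∑ vᵢ Rᵢ` of the rows of `A`; `δ i` plays the role of the distance
-- of the code spanned by `R₀, …, Rᵢ` in the Blackmore–Norton bound.
def IsRowWeightBound [DecidableEq F] (A : Matrix (Fin s) (Fin m) F) (δ : Fin s → ℕ) : Prop :=
  ∀ i (v : Fin s → F), v i ≠ 0 → (∀ i', i < i' → v i' = 0) →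
    δ i ≤ hammingNorm (Aᵀ *ᵥ v)

theorem mul_hammingNorm_le_hammingNorm_matrixProduct [DecidableEq F] {δ : Fin s → ℕ}
    (hδ : IsRowWeightBound A δ)
    {c : Fin s → Fin n → F} {i : Fin s} (hc : ∀ i', i < i' → c i' = 0) :
    δ i * hammingNorm (c i) ≤
      hammingNorm fun p : Fin m × Fin n => ∑ i, A i p.1 * c i p.2 := by
  calc δ i * hammingNorm (c i) = ∑ t ∈ {t | c i t ≠ 0}, δ i := by
        rw [sum_const, smul_eq_mul, mul_comm, hammingNorm]
    _ ≤ ∑ t ∈ {t | c i t ≠ 0}, hammingNorm (Aᵀ *ᵥ fun i' => c i' t) :=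
        sum_le_sum fun t ht => hδ i _ (mem_filter.1 ht).2 fun i' hi' => congrFun (hc i' hi') t
    _ ≤ ∑ t, hammingNorm (Aᵀ *ᵥ fun i' => c i' t) := sum_le_sum_of_subset (subset_univ _)
    _ = _ := by rw [hammingNorm_prod_eq_sum]; rfl

theorem le_minDist_matrixProductCode [DecidableEq F] {δ : Fin s → ℕ}
    (hδ : IsRowWeightBound A δ)
    {N : ℕ} (hN : ∀ i, N ≤ δ i * minDist (C i)) (hne : matrixProductCode A C ≠ ⊥) :
    N ≤ minDist (matrixProductCode A C) := by
  refine le_minDist hne ?_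
  rintro _ ⟨c, hc, rfl⟩ hx₀
  have hsupp : (univ.filter fun i => c i ≠ 0).Nonempty := by
    by_contra! h
    exact hx₀ (by ext p; simp_all [filter_eq_empty_iff])
  obtain ⟨i, hi, hmax⟩ := (univ.filter fun i => c i ≠ 0).exists_max_image id hsupp
  have hlast : ∀ i', i < i' → c i' = 0 := fun i' hi' => by
    by_contra h
    exact absurd hi' (not_lt.2 (hmax i' (by simpa using h)))
  calc N ≤ δ i * minDist (C i) := hN i
    _ ≤ δ i * hammingNorm (c i) :=
        Nat.mul_le_mul_left _ (minDist_le_hammingNorm (hc i) (by simpa using hi))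
    _ ≤ _ := mul_hammingNorm_le_hammingNorm_matrixProduct hδ hlast

end MatrixProductCode

section Hadamard4

def hadamard4 : Matrix (Fin 4) (Fin 4) F :=
  !![1, 1, 1, 1; 1, 1, -1, -1; 1, -1, 1, -1; 1, -1, -1, 1]

theorem hadamard4_mul_transpose : hadamard4 * hadamard4ᵀ = diagonal fun _ => (4 : F) := by
  ext i j
  fin_cases i <;> fin_cases j <;>
    simp only [hadamard4, mul_apply, transpose_apply, of_apply, Fin.sum_univ_four, Fin.isValue,
      Fin.mk_one, Fin.reduceFinMk, Fin.zero_eta, cons_val', Matrix.cons_val, cons_val_fin_one,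
      diagonal_apply_eq, diagonal_apply_ne, ne_eq, Fin.reduceEq, not_false_eq_true] <;>
    norm_num

theorem hadamard4_transpose_mulVec_injective (h4 : (4 : F) ≠ 0) :
    Function.Injective (hadamard4ᵀ : Matrix (Fin 4) (Fin 4) F).mulVec := by
  rw [mulVec_injective_iff_isUnit, isUnit_transpose]
  refine (isUnit_iff_isUnit_det _).2
    (isUnit_det_of_right_inverse (B := hadamard4ᵀ * diagonal fun _ => (4 : F)⁻¹) ?_)
  rw [← Matrix.mul_assoc, hadamard4_mul_transpose, diagonal_mul_diagonal]
  simp [h4]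

theorem hadamard4_transpose_mulVec (v : Fin 4 → F) :
    hadamard4ᵀ *ᵥ v = ![v 0 + v 1 + v 2 + v 3, v 0 + v 1 - v 2 - v 3,
      v 0 - v 1 + v 2 - v 3, v 0 - v 1 - v 2 + v 3] := by
  ext j
  fin_cases j <;>
    simp only [hadamard4, mulVec, dotProduct, transpose_apply, of_apply, Fin.sum_univ_four,
      Fin.isValue, Fin.mk_one, Fin.reduceFinMk, Fin.zero_eta, cons_val', Matrix.cons_val,
      cons_val_fin_one] <;>
    ring

theorem isRowWeightBound_hadamard4 [DecidableEq F] (h2 : (2 : F) ≠ 0) :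
    IsRowWeightBound (hadamard4 : Matrix (Fin 4) (Fin 4) F) ![4, 2, 2, 1] := by
  intro i v hvi hv
  have hw := hadamard4_transpose_mulVec v
  fin_cases i
  · obtain ⟨hv1, hv2, hv3⟩ : v 1 = 0 ∧ v 2 = 0 ∧ v 3 = 0 :=
      ⟨hv 1 (by decide), hv 2 (by decide), hv 3 (by decide)⟩
    show 4 ≤ #(filter _ univ)
    rw [filter_true_of_mem fun j _ => ?_]
    · rfl
    · fin_cases j <;> simpa [hw, hv1, hv2, hv3] using hvi
  · obtain ⟨hv2, hv3⟩ : v 2 = 0 ∧ v 3 = 0 := ⟨hv 2 (by decide), hv 3 (by decide)⟩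
    have hdiff : 2 * v 1 ≠ 0 := mul_ne_zero h2 hvi
    refine two_le_hammingNorm_of_ne (a := 0) (b := 2) (c := 1) (d := 3) (by decide)
      (sub_ne_zero.1 ?_) (sub_ne_zero.1 ?_) <;>
      · convert hdiff using 1; simp only [hw, hv2, hv3, Matrix.cons_val]; ring
  · have hv3 : v 3 = 0 := hv 3 (by decide)
    have hdiff : 2 * v 2 ≠ 0 := mul_ne_zero h2 hvi
    refine two_le_hammingNorm_of_ne (a := 0) (b := 1) (c := 2) (d := 3) (by decide)
      (sub_ne_zero.1 ?_) (sub_ne_zero.1 ?_) <;>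
      · convert hdiff using 1; simp only [hw, hv3, Matrix.cons_val]; ring
  · show 1 ≤ _
    have h4 : (4 : F) ≠ 0 := by
      rw [show (4 : F) = 2 * 2 by norm_num]
      exact mul_ne_zero h2 h2
    rw [Nat.one_le_iff_ne_zero, hammingNorm_ne_zero_iff, ← mulVec_zero hadamard4ᵀ]
    exact fun h0 => hvi (congrFun (hadamard4_transpose_mulVec_injective h4 h0) 3)

end Hadamard4

theorem stmt18 {F : Type*} [Field F] [Fintype F] [DecidableEq F]
    (hq : Fintype.card F % 4 = 1)
    {n : ℕ} (C : Fin 4 → Submodule F (Fin n → F)) (k d : Fin 4 → ℕ)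
    (hLCD : ∀ i, IsLCD (C i))
    (hk : ∀ i, Module.finrank F (C i) = k i)
    (hC : ∀ i, C i ≠ ⊥)
    (hd : ∀ i, minDist (C i) = d i) :
    IsLCD
      (matrixProductCode (!![1,1,1,1; 1,1,-1,-1; 1,-1,1,-1; 1,-1,-1,1] :
        Matrix (Fin 4) (Fin 4) F) C) ∧
    Module.finrank F
      (matrixProductCode (!![1,1,1,1; 1,1,-1,-1; 1,-1,1,-1; 1,-1,-1,1] :
        Matrix (Fin 4) (Fin 4) F) C) = k 0 + k 1 + k 2 + k 3 ∧
    min (4 * d 0) (min (2 * d 1) (min (2 * d 2) (d 3)))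
      ≤ minDist
        (matrixProductCode (!![1,1,1,1; 1,1,-1,-1; 1,-1,1,-1; 1,-1,-1,1] :
          Matrix (Fin 4) (Fin 4) F) C) := by
  have h2 : (2 : F) ≠ 0 := Ring.two_ne_zero fun h => by
    have := FiniteField.even_card_iff_char_two.1 h
    omega
  have h4 : (4 : F) ≠ 0 := by
    rw [show (4 : F) = 2 * 2 by norm_num]
    exact mul_ne_zero h2 h2
  have hrank : Module.finrank F (matrixProductCode hadamard4 C) = k 0 + k 1 + k 2 + k 3 := by
    rw [finrank_matrixProductCode C (hadamard4_transpose_mulVec_injective h4), Fin.sum_univ_four,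
      hk, hk, hk, hk]
  refine ⟨isLCD_matrixProductCode hadamard4_mul_transpose (fun _ => h4) hLCD, hrank, ?_⟩
  refine le_minDist_matrixProductCode (isRowWeightBound_hadamard4 h2) (fun i => ?_) ?_
  · fin_cases i <;> simp [hd]
  · rw [Ne, ← Submodule.finrank_eq_zero, hrank, ← hk 0]
    have := Submodule.one_le_finrank_iff.2 (hC 0)
    omega
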